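/- arXiv:math/0512238 — 2 statements merged into one kernel-verified Lean document; each statement's English description precedes it below -/
import Mathlib

section
/- There exists a universal constant B > 0 with the following property. Let n be a positive integer and let u and σ² be real numbers with 0 < σ² ≤ 1/8, n > 3u ≥ 6 and u > 4nσ². Let X₁, …, Xₙ be independent identically distributed random variables with P(Xⱼ = 1) = P(Xⱼ = −1) = σ²/2 and P(Xⱼ = 0) = 1 − σ², and set Sₙ = Σ_{j=1}^n Xⱼ. Then E Sₙ = 0, Var Sₙ = nσ², and P(Sₙ ≥ u) > exp{−B·u·log(u/(nσ²))}. -/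
/-!
On the event that exactly `k = ⌈u⌉` of the `Xⱼ` equal `1` and all others vanish, `Sₙ = k ≥ u`.
This event has probability `C(n,k) (σ²/2)ᵏ (1 - σ²)ⁿ⁻ᵏ ≥ (nσ²/2k)ᵏ e^{-2nσ²}`, using
`C(n,k) ≥ (n/k)ᵏ` and `log (1 - σ²) ≥ -σ²/(1 - σ²)`. Since `u > 4nσ²` we have
`2k/(nσ²) < (u/(nσ²))²` and `log (u/(nσ²)) > 1`, so the logarithm of this probability exceeds
`-4u log (u/(nσ²))`; thus `B = 4` works.
-/

open MeasureTheory ProbabilityTheory Finset Real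
open scoped ENNReal Nat

lemma aemeasurable_of_map_eq {α β : Type*} [MeasurableSpace α] [MeasurableSpace β] {f : α → β}
    {μ : Measure α} {ν : Measure β} [NeZero ν] (h : μ.map f = ν) : AEMeasurable f μ :=
  .of_map_ne_zero (h ▸ NeZero.ne ν)

lemma integrable_ofReal_smul_dirac {α : Type*} [MeasurableSpace α] [MeasurableSingletonClass α]
    (f : α → ℝ) (c : ℝ) (a : α) : Integrable f (ENNReal.ofReal c • Measure.dirac a) :=
  (integrable_dirac (by simp)).smul_measure ENNReal.ofReal_ne_top

noncomputable def threePointLaw (v : ℝ) : Measure ℝ :=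
  ENNReal.ofReal (v / 2) • Measure.dirac 1 + ENNReal.ofReal (v / 2) • Measure.dirac (-1) +
    ENNReal.ofReal (1 - v) • Measure.dirac 0

section ThreePointLaw

variable {v : ℝ}

lemma threePointLaw_singleton_one : threePointLaw v {1} = ENNReal.ofReal (v / 2) := by
  simp [threePointLaw, Set.indicator_apply]
  norm_num

lemma threePointLaw_singleton_zero : threePointLaw v {0} = ENNReal.ofReal (1 - v) := by
  simp [threePointLaw]

lemma isProbabilityMeasure_threePointLaw (h0 : 0 ≤ v) (h1 : v ≤ 1) :
    IsProbabilityMeasure (threePointLaw v) := by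
  constructor
  simp only [threePointLaw, Measure.add_apply, Measure.smul_apply, measure_univ, smul_eq_mul,
    mul_one]
  rw [← ENNReal.ofReal_add (by positivity) (by positivity),
    ← ENNReal.ofReal_add (by positivity) (by linarith)]
  norm_num

lemma integrable_threePointLaw (f : ℝ → ℝ) : Integrable f (threePointLaw v) :=
  ((integrable_ofReal_smul_dirac f _ 1).add_measure (integrable_ofReal_smul_dirac f _ (-1)))
    |>.add_measure (integrable_ofReal_smul_dirac f _ 0)

lemma integral_threePointLaw (h0 : 0 ≤ v) (h1 : v ≤ 1) (f : ℝ → ℝ) :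
    ∫ x, f x ∂threePointLaw v = v / 2 * f 1 + v / 2 * f (-1) + (1 - v) * f 0 := by
  have hdirac := integrable_ofReal_smul_dirac f
  rw [threePointLaw, integral_add_measure ((hdirac _ 1).add_measure (hdirac _ (-1))) (hdirac _ 0),
    integral_add_measure (hdirac _ 1) (hdirac _ (-1))]
  simp only [integral_smul_measure, integral_dirac, smul_eq_mul,
    ENNReal.toReal_ofReal (by positivity : 0 ≤ v / 2),
    ENNReal.toReal_ofReal (by linarith : 0 ≤ 1 - v)]

lemma integral_id_threePointLaw (h0 : 0 ≤ v) (h1 : v ≤ 1) : ∫ x, x ∂threePointLaw v = 0 := by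
  rw [integral_threePointLaw h0 h1 fun x => x]
  ring

lemma memLp_id_threePointLaw : MemLp id 2 (threePointLaw v) :=
  (memLp_two_iff_integrable_sq aestronglyMeasurable_id).2 (integrable_threePointLaw _)

lemma variance_id_threePointLaw (h0 : 0 ≤ v) (h1 : v ≤ 1) : Var[id; threePointLaw v] = v := by
  rw [variance_eq_integral aemeasurable_id, integral_threePointLaw h0 h1]
  simp only [id, integral_id_threePointLaw h0 h1]
  ring

end ThreePointLaw

section IndependentSum

variable {ι Ω : Type*} [Fintype ι] [MeasurableSpace Ω] {P : Measure Ω}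
  {X : ι → Ω → ℝ}

lemma integral_sum_of_map_eq_threePointLaw {v : ℝ} (h0 : 0 ≤ v) (h1 : v ≤ 1)
    (hX : ∀ j, P.map (X j) = threePointLaw v) : ∫ ω, ∑ j, X j ω ∂P = 0 := by
  have := isProbabilityMeasure_threePointLaw h0 h1
  have hXm (j : ι) : AEMeasurable (X j) P := aemeasurable_of_map_eq (hX j)
  have hint (j : ι) : Integrable (X j) P :=
    (integrable_map_measure aestronglyMeasurable_id (hXm j)).1 (hX j ▸ integrable_threePointLaw id)
  rw [integral_finsetSum _ fun j _ => hint j]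
  refine Finset.sum_eq_zero fun j _ => ?_
  calc ∫ ω, X j ω ∂P = ∫ x, x ∂P.map (X j) := (integral_map (hXm j) aestronglyMeasurable_id).symm
    _ = 0 := by rw [hX j, integral_id_threePointLaw h0 h1]

lemma variance_sum_of_map_eq_threePointLaw {v : ℝ} (h0 : 0 ≤ v) (h1 : v ≤ 1)
    (hindep : iIndepFun X P) (hX : ∀ j, P.map (X j) = threePointLaw v) :
    Var[fun ω => ∑ j, X j ω; P] = Fintype.card ι * v := by
  have := isProbabilityMeasure_threePointLaw h0 h1
  have hXm (j : ι) : AEMeasurable (X j) P := aemeasurable_of_map_eq (hX j)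
  have hL2 (j : ι) : MemLp (X j) 2 P :=
    (memLp_map_measure_iff aestronglyMeasurable_id (hXm j)).1 (hX j ▸ memLp_id_threePointLaw)
  have hvar (j : ι) : Var[X j; P] = v := by
    rw [← variance_id_map (hXm j), hX j, variance_id_threePointLaw h0 h1]
  rw [← Finset.sum_fn, IndepFun.variance_sum (fun j _ => hL2 j)
    fun i _ j _ hij => hindep.indepFun hij]
  simp [hvar]

end IndependentSum

section Tail

variable {ι : Type*} [Fintype ι]

lemma choose_mul_le_pi_sum_eq (ν : Measure ℝ) [SigmaFinite ν] (k : ℕ) :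
    ((Fintype.card ι).choose k : ℝ≥0∞) * (ν {1} ^ k * ν {0} ^ (Fintype.card ι - k)) ≤
      Measure.pi (fun _ : ι => ν) {x | ∑ i, x i = k} := by
  classical
  set box : Finset ι → Set (ι → ℝ) := fun T => Set.univ.pi fun i => if i ∈ T then {1} else {0}
  have hbox (T : Finset ι) (hT : #T = k) :
      Measure.pi (fun _ => ν) (box T) = ν {1} ^ k * ν {0} ^ (Fintype.card ι - k) := by
    rw [Measure.pi_pi, ← hT]
    simp only [apply_ite ν, prod_ite, filter_mem_eq_of_subset (subset_univ T), prod_const,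
      filter_not, card_sdiff, card_univ, inter_univ]
  have hdisj : (↑(powersetCard k (univ : Finset ι)) : Set (Finset ι)).PairwiseDisjoint box := by
    intro T hT T' hT' hne
    rw [mem_coe, mem_powersetCard] at hT hT'
    obtain ⟨i, hiT, hiT'⟩ := not_subset.1 fun h => hne (eq_of_subset_of_card_le h (by omega))
    refine Set.disjoint_left.2 fun x hx hx' => ?_
    have h1 : x i = 1 := by simpa [box, hiT] using hx i (Set.mem_univ i)
    have h0 : x i = 0 := by simpa [box, hiT'] using hx' i (Set.mem_univ i)
    exact one_ne_zero (h1.symm.trans h0)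
  have hsub : ⋃ T ∈ powersetCard k univ, box T ⊆ {x | ∑ i, x i = k} := by
    simp only [Set.iUnion_subset_iff, mem_powersetCard]
    intro T ⟨_, hT⟩ x hx
    have hx (i : ι) : x i = if i ∈ T then 1 else 0 := by
      by_cases hi : i ∈ T <;> simpa [box, hi] using hx i (Set.mem_univ i)
    simp [hx, hT]
  calc _ = ∑ T ∈ powersetCard k univ, Measure.pi (fun _ => ν) (box T) := by
        rw [Finset.sum_congr rfl fun T hT => hbox T (mem_powersetCard.1 hT).2]
        simp
    _ = Measure.pi (fun _ => ν) (⋃ T ∈ powersetCard k univ, box T) :=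
        (measure_biUnion_finset hdisj fun T _ =>
          MeasurableSet.univ_pi fun i => by split_ifs <;> exact measurableSet_singleton _).symm
    _ ≤ _ := measure_mono hsub

lemma choose_mul_le_measure_sum_ge {Ω : Type*} [MeasurableSpace Ω] {P : Measure Ω}
    [IsProbabilityMeasure P] {X : ι → Ω → ℝ} {ν : Measure ℝ} [IsProbabilityMeasure ν]
    (hindep : iIndepFun X P) (hX : ∀ j, P.map (X j) = ν) {u : ℝ} {k : ℕ} (hk : u ≤ k) :
    ((Fintype.card ι).choose k : ℝ≥0∞) * (ν {1} ^ k * ν {0} ^ (Fintype.card ι - k)) ≤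
      P {ω | u ≤ ∑ j, X j ω} := by
  have hXm (j : ι) : AEMeasurable (X j) P := aemeasurable_of_map_eq (hX j)
  have hlaw : P.map (fun ω j => X j ω) = Measure.pi fun _ => ν := by
    simp_rw [(iIndepFun_iff_map_fun_eq_pi_map hXm).1 hindep, hX]
  calc _ ≤ Measure.pi (fun _ : ι => ν) {x | ∑ i, x i = k} := choose_mul_le_pi_sum_eq ν k
    _ ≤ Measure.pi (fun _ : ι => ν) {x | u ≤ ∑ i, x i} :=
        measure_mono fun x (hx : ∑ i, x i = k) => show u ≤ ∑ i, x i from hx ▸ hk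
    _ = P {ω | u ≤ ∑ j, X j ω} := by
        rw [← hlaw, Measure.map_apply_of_aemeasurable (aemeasurable_pi_lambda _ hXm)
          (measurableSet_le measurable_const (by fun_prop))]
        rfl

end Tail

lemma pow_div_le_choose {n k : ℕ} (hk : k ≤ n) : ((n : ℝ) / k) ^ k ≤ n.choose k := by
  rcases Nat.eq_zero_or_pos k with rfl | hk0
  · simp
  have hfac : (k ! : ℝ) = ∏ i ∈ range k, ((k : ℝ) - i) := by
    rw [← Nat.descFactorial_self, Nat.descFactorial_eq_prod_range, Nat.cast_prod]
    exact prod_congr rfl fun i hi => Nat.cast_sub (mem_range.1 hi).le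
  have hdesc : (n.choose k : ℝ) * k ! = ∏ i ∈ range k, ((n : ℝ) - i) := by
    rw [← Nat.cast_mul, mul_comm, ← Nat.descFactorial_eq_factorial_mul_choose,
      Nat.descFactorial_eq_prod_range, Nat.cast_prod]
    exact prod_congr rfl fun i hi => Nat.cast_sub ((mem_range.1 hi).le.trans hk)
  -- termwise, `n / k ≤ (n - i) / (k - i)` for `i < k ≤ n`
  have hterm : ∏ i ∈ range k, ((n : ℝ) * (k - i)) ≤ ∏ i ∈ range k, (((n : ℝ) - i) * k) := by
    refine prod_le_prod (fun i hi => ?_) (fun i hi => ?_)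
    · have : (i : ℝ) < k := by exact_mod_cast mem_range.1 hi
      positivity
    · have : (k : ℝ) ≤ n := by exact_mod_cast hk
      nlinarith [(Nat.cast_nonneg i : (0 : ℝ) ≤ i)]
  rw [prod_mul_distrib, prod_mul_distrib, prod_const, prod_const, card_range, ← hfac,
    ← hdesc] at hterm
  rw [div_pow, div_le_iff₀ (by positivity)]
  refine le_of_mul_le_mul_right ?_ (by positivity : (0 : ℝ) < k !)
  linarith

lemma exp_neg_mul_le_one_sub_pow {v : ℝ} (hv : v < 1) (m : ℕ) :
    exp (-(m * (v / (1 - v)))) ≤ (1 - v) ^ m := by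
  have hv' : 0 < 1 - v := by linarith
  have hlog : -(v / (1 - v)) ≤ log (1 - v) := by
    have := one_sub_inv_le_log_of_pos hv'
    rwa [show 1 - (1 - v)⁻¹ = -(v / (1 - v)) by field_simp; ring] at this
  calc exp (-(m * (v / (1 - v)))) ≤ exp (m * log (1 - v)) := by
        rw [exp_le_exp, ← mul_neg]
        exact mul_le_mul_of_nonneg_left hlog m.cast_nonneg
    _ = (1 - v) ^ m := by rw [exp_nat_mul, exp_log hv']

lemma mul_log_lt_of_le_add_one {k u s : ℝ} (hk : 0 < k) (hku : k ≤ u + 1) (hu : 2 ≤ u)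
    (hs : 0 < s) (hus : 4 * s < u) : k * log (2 * k / s) < 3 * u * log (u / s) := by
  have hL : 0 < log (u / s) := log_pos ((one_lt_div hs).2 (by linarith))
  have hsq : 2 * k / s < (u / s) ^ 2 := by
    rw [div_pow, div_lt_div_iff₀ hs (by positivity)]
    have h1 : 2 * k * s ^ 2 ≤ 3 * u * s ^ 2 :=
      mul_le_mul_of_nonneg_right (by linarith) (by positivity)
    nlinarith [mul_pos (by linarith : (0 : ℝ) < u) hs]
  calc k * log (2 * k / s) < k * (2 * log (u / s)) := by
        rw [show 2 * log (u / s) = log ((u / s) ^ 2) by rw [log_pow]; norm_num]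
        exact mul_lt_mul_of_pos_left (log_lt_log (by positivity) (by exact_mod_cast hsq)) hk
    _ ≤ 3 * u * log (u / s) := by nlinarith

lemma exp_lt_choose_mul_pow {n : ℕ} {u v : ℝ} (hv : 0 < v) (hv8 : v ≤ 1 / 8) (hn : 3 * u < n)
    (hu : 2 ≤ u) (huv : 4 * n * v < u) :
    exp (-4 * u * log (u / (n * v))) <
      n.choose ⌈u⌉₊ * ((v / 2) ^ ⌈u⌉₊ * (1 - v) ^ (n - ⌈u⌉₊)) := by
  set k := ⌈u⌉₊
  set s := (n : ℝ) * v
  have hn0 : (0 : ℝ) < n := by linarith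
  have hs : 0 < s := by positivity
  have hku : u ≤ k := Nat.le_ceil u
  have hk1 : (k : ℝ) < u + 1 := Nat.ceil_lt_add_one (by linarith)
  have hkn : k ≤ n := by exact_mod_cast (show (k : ℝ) ≤ n by linarith)
  have hL : 1 < log (u / s) := by
    rw [lt_log_iff_exp_lt (by positivity), lt_div_iff₀ hs]
    nlinarith [exp_one_lt_d9]
  have hlog := mul_log_lt_of_le_add_one (by linarith) hk1.le hu hs (by linarith)
  have hv1 : 0 < 1 - v := by linarith
  have hratio : v / (1 - v) ≤ 2 * v := by
    rw [div_le_iff₀ hv1]; nlinarith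
  have hsmall : n * (v / (1 - v)) < u := by nlinarith
  calc exp (-4 * u * log (u / s))
      < exp (k * log (s / (2 * k))) * exp (-(n * (v / (1 - v)))) := by
        rw [← exp_add, exp_lt_exp, ← inv_div (2 * (k : ℝ)), log_inv]
        nlinarith
    _ ≤ (s / (2 * k)) ^ k * (1 - v) ^ (n - k) := by
        rw [exp_nat_mul, exp_log (by positivity)]
        refine mul_le_mul_of_nonneg_left ?_ (by positivity)
        refine (exp_le_exp.2 ?_).trans (exp_neg_mul_le_one_sub_pow (by linarith) (n - k))
        have : ((n - k : ℕ) : ℝ) ≤ n := by exact_mod_cast Nat.sub_le n k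
        nlinarith [div_nonneg hv.le hv1.le]
    _ = ((n : ℝ) / k) ^ k * ((v / 2) ^ k * (1 - v) ^ (n - k)) := by
        rw [← mul_assoc, ← mul_pow]
        ring
    _ ≤ n.choose k * ((v / 2) ^ k * (1 - v) ^ (n - k)) :=
        mul_le_mul_of_nonneg_right (pow_div_le_choose hkn)
          (mul_nonneg (by positivity) (pow_nonneg hv1.le _))

/-- Sharpness of Bennett-type bounds: lower bound for the tail of sums of iid
three-valued random variables. -/
theorem tail_lower_bound_three_valued :
    ∃ B : ℝ, 0 < B ∧
      ∀ (n : ℕ) (u v : ℝ), 0 < v → v ≤ 1 / 8 → (n : ℝ) > 3 * u → 3 * u ≥ 6 →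
        u > 4 * n * v →
      ∀ (Ω : Type) (_ : MeasurableSpace Ω) (P : Measure Ω), IsProbabilityMeasure P →
      ∀ X : Fin n → Ω → ℝ,
        iIndepFun X P →
        (∀ j, Measure.map (X j) P =
            ENNReal.ofReal (v / 2) • Measure.dirac (1 : ℝ) +
            ENNReal.ofReal (v / 2) • Measure.dirac (-1 : ℝ) +
            ENNReal.ofReal (1 - v) • Measure.dirac (0 : ℝ)) →
        (∫ ω, (∑ j, X j ω) ∂P) = 0 ∧
        variance (fun ω => ∑ j, X j ω) P = n * v ∧
        P {ω | (∑ j, X j ω) ≥ u} >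
          ENNReal.ofReal (Real.exp (-B * u * Real.log (u / (n * v)))) := by
  refine ⟨4, by norm_num, ?_⟩
  intro n u v hv hv8 hn hu6 huv Ω _ P _ X hindep hlaw
  have hv1 : v ≤ 1 := by linarith
  have := isProbabilityMeasure_threePointLaw hv.le hv1
  refine ⟨integral_sum_of_map_eq_threePointLaw hv.le hv1 hlaw,
    by simpa using variance_sum_of_map_eq_threePointLaw hv.le hv1 hindep hlaw, ?_⟩
  have htail := choose_mul_le_measure_sum_ge (ν := threePointLaw v) hindep hlaw (Nat.le_ceil u)
  rw [Fintype.card_fin, threePointLaw_singleton_one, threePointLaw_singleton_zero] at htail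
  refine lt_of_lt_of_le ?_ htail
  rw [← ENNReal.ofReal_natCast, ← ENNReal.ofReal_pow (by positivity),
    ← ENNReal.ofReal_pow (by linarith), ← ENNReal.ofReal_mul (by positivity),
    ← ENNReal.ofReal_mul (by positivity), ENNReal.ofReal_lt_ofReal_iff_of_nonneg (by positivity)]
  exact exp_lt_choose_mul_pow hv hv8 hn (by linarith) huv
end

section
/- Let k ≥ 1 be an integer, let η be a standard normal random variable and let H_k denote the k-th probabilists' Hermite polynomial with leading coefficient 1. Then there exists a constant C̄ = C̄(k) > 0 such that for every σ > 0 and every u > 0, P(σ·|H_k(η)| > u) ≥ ( C̄ / ( (u/σ)^{1/k} + 1 ) ) · exp{ − (1/2)·(u/σ)^{2/k} }. -/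
/-!
`H_k` is monic and its `x^(k-1)` coefficient vanishes by parity, so `H_k(x) ≥ x^k (1 - c/x²)` for
`x ≥ 1`, which exceeds `w^k` as soon as `x² ≥ w² + b²` for a suitable constant `b`. With
`w = (u/σ)^(1/k)` the event therefore contains `{η ≥ √(w² + b²)}`. On the interval of length
`1/(w+1)` starting at `√(w² + b²)` one has `x² ≤ w² + (b+1)²`, so the Gaussian density there is
at least `e^(-w²/2) φ(b+1)`. The vanishing coefficient is what puts the threshold at
`√(w² + b²) = w + O(1/w)` instead of `w + O(1)`, which would cost a factor `e^(-O(w))`.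
-/

open MeasureTheory ProbabilityTheory

open Polynomial Finset in
theorem Polynomial.Monic.exists_pow_mul_one_sub_div_sq_le_eval {p : ℝ[X]} {n : ℕ}
    (hp : p.Monic) (hdeg : p.natDegree = n + 1) (hcoeff : p.coeff n = 0) :
    ∃ c : ℝ, 0 ≤ c ∧ ∀ x : ℝ, 1 ≤ x → x ^ (n + 1) * (1 - c / x ^ 2) ≤ p.eval x := by
  set c := ∑ i ∈ range n, |p.coeff i|
  refine ⟨c, sum_nonneg fun i _ => abs_nonneg _, fun x hx => ?_⟩
  have hterm : ∀ i ∈ range n, -(|p.coeff i| * (x ^ (n + 1) / x ^ 2)) ≤ p.coeff i * x ^ i := by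
    intro i hi
    have hxi : x ^ i ≤ x ^ (n + 1) / x ^ 2 := by
      rw [le_div_iff₀ (by positivity), ← pow_add]
      exact pow_le_pow_right₀ hx (by simpa using hi)
    have hprod := mul_le_mul (neg_le_abs (p.coeff i)) hxi (by positivity) (abs_nonneg _)
    linarith
  have hsum := sum_le_sum hterm
  rw [sum_neg_distrib, ← sum_mul] at hsum
  rw [eval_eq_sum_range, hdeg, sum_range_succ, sum_range_succ, hcoeff, ← hdeg,
    hp.coeff_natDegree, hdeg]
  linarith [show x ^ (n + 1) * (1 - c / x ^ 2) = x ^ (n + 1) - c * (x ^ (n + 1) / x ^ 2) by ring]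

theorem pow_lt_pow_mul_one_sub_div_sq {n : ℕ} (hn : n ≠ 0) {c w x : ℝ} (hc : 0 ≤ c)
    (hw : 0 ≤ w) (hx : 0 ≤ x) (hwx : w ^ 2 + 2 * c + 1 ≤ x ^ 2) :
    w ^ n < x ^ n * (1 - c / x ^ 2) := by
  have hx0 : 0 < x := by nlinarith
  have hwx' : w ≤ x := (pow_le_pow_iff_left₀ hw hx two_ne_zero).mp (by linarith)
  have hratio : w / x < 1 - c / x ^ 2 := by
    rw [lt_sub_iff_add_lt, div_add_div _ _ hx0.ne' (by positivity), div_lt_one (by positivity)]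
    have hgap : w * x + c < x ^ 2 := by nlinarith [sq_nonneg (x - w)]
    nlinarith [mul_lt_mul_of_pos_left hgap hx0]
  calc w ^ n = (w / x) ^ n * x ^ n := by rw [div_pow, div_mul_cancel₀ _ (by positivity)]
    _ ≤ (w / x) * x ^ n := by
      gcongr; exact pow_le_of_le_one (by positivity) ((div_le_one hx0).mpr hwx') hn
    _ < (1 - c / x ^ 2) * x ^ n := by gcongr
    _ = x ^ n * (1 - c / x ^ 2) := mul_comm _ _

open Polynomial in
theorem Polynomial.Monic.exists_pow_lt_eval {p : ℝ[X]} {n : ℕ} (hp : p.Monic)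
    (hdeg : p.natDegree = n + 1) (hcoeff : p.coeff n = 0) :
    ∃ b : ℝ, 1 ≤ b ∧ ∀ w x : ℝ, 0 ≤ w → 0 ≤ x → w ^ 2 + b ^ 2 ≤ x ^ 2 →
      w ^ (n + 1) < p.eval x := by
  obtain ⟨c, hc, hlow⟩ := hp.exists_pow_mul_one_sub_div_sq_le_eval hdeg hcoeff
  refine ⟨c + 1, by linarith, fun w x hw hx hwx => ?_⟩
  have hwx' : w ^ 2 + 2 * c + 1 ≤ x ^ 2 := by nlinarith
  exact (pow_lt_pow_mul_one_sub_div_sq n.succ_ne_zero hc hw hx hwx').trans_le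
    (hlow x (by nlinarith))

theorem exists_pow_lt_aeval_hermite (n : ℕ) :
    ∃ b : ℝ, 1 ≤ b ∧ ∀ w x : ℝ, 0 ≤ w → 0 ≤ x → w ^ 2 + b ^ 2 ≤ x ^ 2 →
      w ^ (n + 1) < Polynomial.aeval x (Polynomial.hermite (n + 1)) := by
  have hH := (Polynomial.hermite_monic (n + 1)).map (algebraMap ℤ ℝ)
  obtain ⟨b, hb, hHb⟩ := hH.exists_pow_lt_eval
    (by rw [(Polynomial.hermite_monic _).natDegree_map, Polynomial.natDegree_hermite])
    (by rw [Polynomial.coeff_map, Polynomial.coeff_hermite_of_odd_add ⟨n, by ring⟩, map_zero])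
  exact ⟨b, hb, fun w x hw hx hwx =>
    Polynomial.eval_map_algebraMap (Polynomial.hermite (n + 1)) x ▸ hHb w x hw hx hwx⟩

theorem gaussianPDFReal_antitoneOn (μ : ℝ) (v : NNReal) :
    AntitoneOn (gaussianPDFReal μ v) (Set.Ici μ) := by
  intro x hx y _ hxy
  simp only [gaussianPDFReal_def]
  gcongr
  exact sub_nonneg.mpr hx

theorem exp_mul_gaussianPDFReal_le {x y z : ℝ} (h : x ^ 2 ≤ y ^ 2 + z ^ 2) :
    Real.exp (-(1 / 2) * y ^ 2) * gaussianPDFReal 0 1 z ≤ gaussianPDFReal 0 1 x := by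
  simp only [gaussianPDFReal_def, sub_zero, NNReal.coe_one, mul_one]
  rw [mul_left_comm, ← Real.exp_add]
  gcongr
  linarith

theorem ofReal_mul_gaussianPDFReal_le_gaussianReal_Icc {t s : ℝ} (ht : 0 ≤ t) (hs : 0 ≤ s) :
    ENNReal.ofReal (s * gaussianPDFReal 0 1 (t + s)) ≤ gaussianReal 0 1 (Set.Icc t (t + s)) := by
  rw [gaussianReal_apply_eq_integral 0 one_ne_zero]
  gcongr
  have hvol : volume (Set.Icc t (t + s)) = ENNReal.ofReal s := by
    rw [Real.volume_Icc, add_sub_cancel_left]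
  have key : gaussianPDFReal 0 1 (t + s) * volume.real (Set.Icc t (t + s)) ≤
      ∫ x in Set.Icc t (t + s), gaussianPDFReal 0 1 x :=
    setIntegral_ge_of_const_le_real measurableSet_Icc (by simp)
      (fun x hx => gaussianPDFReal_antitoneOn 0 1 (ht.trans hx.1)
        (show (0 : ℝ) ≤ t + s by linarith) hx.2)
      (integrable_gaussianPDFReal 0 1).integrableOn
  rwa [measureReal_def, hvol, ENNReal.toReal_ofReal hs, mul_comm] at key

theorem gaussianReal_Ici_sqrt_ge {b w : ℝ} (hb : 1 ≤ b) (hw : 0 ≤ w) :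
    ENNReal.ofReal (gaussianPDFReal 0 1 (b + 1) / (w + 1) * Real.exp (-(1 / 2) * w ^ 2)) ≤
      gaussianReal 0 1 (Set.Ici √(w ^ 2 + b ^ 2)) := by
  set t := √(w ^ 2 + b ^ 2)
  set s := (w + 1)⁻¹
  have ht0 : 0 ≤ t := Real.sqrt_nonneg _
  have ht2 : t ^ 2 = w ^ 2 + b ^ 2 := Real.sq_sqrt (by positivity)
  have hts : t * s ≤ b := by
    rw [← div_eq_mul_inv, div_le_iff₀ (by positivity), Real.sqrt_le_left (by positivity)]
    nlinarith [mul_le_mul_of_nonneg_right (one_le_pow₀ hb : 1 ≤ b ^ 2) (sq_nonneg w),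
      mul_nonneg (sq_nonneg b) hw]
  have hs1 : s ≤ 1 := inv_le_one_of_one_le₀ (by linarith)
  have hs0 : 0 ≤ s := by positivity
  calc ENNReal.ofReal (gaussianPDFReal 0 1 (b + 1) / (w + 1) * Real.exp (-(1 / 2) * w ^ 2))
      ≤ ENNReal.ofReal (s * gaussianPDFReal 0 1 (t + s)) := by
        refine ENNReal.ofReal_le_ofReal ?_
        rw [div_eq_inv_mul, mul_assoc, mul_comm (gaussianPDFReal _ _ _)]
        refine mul_le_mul_of_nonneg_left ?_ hs0
        exact exp_mul_gaussianPDFReal_le (by nlinarith)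
    _ ≤ gaussianReal 0 1 (Set.Icc t (t + s)) :=
      ofReal_mul_gaussianPDFReal_le_gaussianReal_Icc ht0 hs0
    _ ≤ gaussianReal 0 1 (Set.Ici t) := measure_mono Set.Icc_subset_Ici_self

/-- Lower bound for the tail of `σ |H_k(η)|`, where `H_k` is the `k`-th
probabilists' Hermite polynomial with leading coefficient 1 and `η` is a
standard normal random variable. -/
theorem hermite_tail_lower_bound (k : ℕ) (hk : 1 ≤ k) :
    ∃ C : ℝ, 0 < C ∧
    ∀ (Ω : Type) (_ : MeasurableSpace Ω) (P : Measure Ω), IsProbabilityMeasure P →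
    ∀ η : Ω → ℝ, Measure.map η P = gaussianReal 0 1 →
    ∀ σ u : ℝ, 0 < σ → 0 < u →
      P {ω | σ * |Polynomial.aeval (η ω) (Polynomial.hermite k)| > u} ≥
        ENNReal.ofReal ((C / ((u / σ) ^ ((1 : ℝ) / k) + 1)) *
          Real.exp (-(1 / 2) * (u / σ) ^ ((2 : ℝ) / k))) := by
  obtain ⟨n, rfl⟩ : ∃ n, k = n + 1 := ⟨k - 1, by omega⟩
  obtain ⟨b, hb, hHb⟩ := exists_pow_lt_aeval_hermite n
  refine ⟨gaussianPDFReal 0 1 (b + 1), gaussianPDFReal_pos _ _ _ one_ne_zero, ?_⟩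
  intro Ω _ P _ η hη σ u hσ hu
  rw [one_div ((n + 1 : ℕ) : ℝ)]
  set w := (u / σ) ^ ((n + 1 : ℕ) : ℝ)⁻¹
  have hw : 0 ≤ w := by positivity
  have hwk : w ^ (n + 1) = u / σ := by
    rw [Real.rpow_inv_natCast_pow (by positivity) n.succ_ne_zero]
  have hw2 : (u / σ) ^ ((2 : ℝ) / (n + 1 : ℕ)) = w ^ 2 := by
    rw [← Real.rpow_natCast, ← Real.rpow_mul (by positivity)]
    ring_nf
  have hηP : AEMeasurable η P := .of_map_ne_zero <| hη ▸ IsProbabilityMeasure.ne_zero _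
  rw [hw2]
  calc _ ≤ gaussianReal 0 1 (Set.Ici √(w ^ 2 + b ^ 2)) := gaussianReal_Ici_sqrt_ge hb hw
    _ = P (η ⁻¹' Set.Ici √(w ^ 2 + b ^ 2)) := by
      rw [← hη, Measure.map_apply_of_aemeasurable hηP measurableSet_Ici]
    _ ≤ _ := measure_mono fun ω hω => by
      have hx : 0 ≤ η ω := (Real.sqrt_nonneg _).trans hω
      have hlt := hwk ▸ hHb w (η ω) hw hx ((Real.sqrt_le_left hx).mp hω)
      exact (div_lt_iff₀' hσ).mp (hlt.trans_le (le_abs_self _))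
end
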